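/- Let z ∈ {0,1}^n be a random string whose bits are independent, each equal to 1 with probability p = 1/(2d). If x, y ∈ {0,1}^n have Hamming distance k, then the probability that (x·z mod 2) ≠ (y·z mod 2) equals α_k = 1/2 - (1/2)(1 - 1/d)^k. -/
import Mathlib

theorem sum_prod_bool (n : ℕ) (f : Fin n → Bool → ℝ) :
    ∑ z : Fin n → Bool, ∏ i, f i (z i) = ∏ i, (f i false + f i true) := by
  rw [← Fintype.prod_sum f]
  simp [Fintype.sum_bool, add_comm]

theorem sign_prod (n : ℕ) (P : Fin n → Prop) [DecidablePred P] :
    (∏ i, (if P i then (-1:ℝ) else 1)) = (-1) ^ (Finset.univ.filter P).card := by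
  rw [Finset.prod_ite]
  simp

theorem ind_eq (a b : ℕ) :
    (if a % 2 ≠ b % 2 then (1:ℝ) else 0) = 1/2 - 1/2 * ((-1)^a * (-1)^b) := by
  have h : ∀ c : ℕ, ((-1:ℝ)^c = 1 ∧ c % 2 = 0) ∨ ((-1:ℝ)^c = -1 ∧ c % 2 = 1) := by
    intro c
    rcases Nat.even_or_odd c with hc | hc
    · exact Or.inl ⟨hc.neg_one_pow, Nat.even_iff.mp hc⟩
    · exact Or.inr ⟨hc.neg_one_pow, Nat.odd_iff.mp hc⟩
  rcases h a with ⟨h1, h2⟩ | ⟨h1, h2⟩ <;> rcases h b with ⟨h3, h4⟩ | ⟨h3, h4⟩ <;>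
    simp [h1, h2, h3, h4] <;> norm_num

/-- Let `z ∈ {0,1}ⁿ` have independent bits, each `1` with probability
`p = 1/(2d)`.  If `HAM(x,y) = k` then the probability that
`x·z ≠ y·z (mod 2)` is exactly `1/2 - (1/2)(1 - 1/d)^k`. -/
theorem stmt_5 (n d k : ℕ) (hd : 1 ≤ d) (x y : Fin n → Bool)
    (hk : (Finset.univ.filter fun i => x i ≠ y i).card = k) :
    (∑ z : Fin n → Bool,
        (∏ i, if z i then (1 / (2 * d) : ℝ) else 1 - 1 / (2 * d)) *
          (if (Finset.univ.filter fun i => x i = true ∧ z i = true).card % 2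
              ≠ (Finset.univ.filter fun i => y i = true ∧ z i = true).card % 2
           then 1 else 0))
      = 1 / 2 - (1 / 2) * (1 - 1 / d) ^ k := by
  classical
  have hd0 : (d:ℝ) ≠ 0 := by positivity
  set p : ℝ := 1 / (2 * d) with hp
  set F : Fin n → Bool → ℝ := fun i t =>
    (if t then p else 1 - p) * (if (x i ≠ y i) ∧ t = true then -1 else 1) with hF
  set G : Fin n → Bool → ℝ := fun _ t => (if t then p else 1 - p) with hG
  have step : ∀ z : Fin n → Bool,
      (∏ i, if z i then p else 1 - p) *
        (if (Finset.univ.filter fun i => x i = true ∧ z i = true).card % 2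
            ≠ (Finset.univ.filter fun i => y i = true ∧ z i = true).card % 2
         then (1:ℝ) else 0)
      = 1/2 * ∏ i, G i (z i) - 1/2 * ∏ i, F i (z i) := by
    intro z
    rw [ind_eq]
    have hsx := sign_prod n (fun i => x i = true ∧ z i = true)
    have hsy := sign_prod n (fun i => y i = true ∧ z i = true)
    rw [← hsx, ← hsy]
    have hcomb : (∏ i, (if x i = true ∧ z i = true then (-1:ℝ) else 1)) *
        (∏ i, (if y i = true ∧ z i = true then (-1:ℝ) else 1))
        = ∏ i, (if (x i ≠ y i) ∧ z i = true then (-1:ℝ) else 1) := by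
      rw [← Finset.prod_mul_distrib]
      apply Finset.prod_congr rfl
      intro i _
      rcases Bool.eq_false_or_eq_true (x i) with h1 | h1 <;>
        rcases Bool.eq_false_or_eq_true (y i) with h2 | h2 <;>
        rcases Bool.eq_false_or_eq_true (z i) with h3 | h3 <;>
        simp [h1, h2, h3]
    rw [hcomb]
    have hFz : (∏ i, (if z i then p else 1 - p)) *
        (∏ i, (if (x i ≠ y i) ∧ z i = true then (-1:ℝ) else 1)) = ∏ i, F i (z i) := by
      rw [← Finset.prod_mul_distrib]
    have hGz : (∏ i, (if z i then p else 1 - p)) = ∏ i, G i (z i) := rfl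
    rw [← hFz, ← hGz]
    ring
  rw [Finset.sum_congr rfl (fun z _ => step z), Finset.sum_sub_distrib,
    ← Finset.mul_sum, ← Finset.mul_sum, sum_prod_bool, sum_prod_bool]
  have hG1 : (∏ i : Fin n, (G i false + G i true)) = 1 := by
    simp [hG]
  have hF1 : (∏ i : Fin n, (F i false + F i true)) = (1 - 1/d) ^ k := by
    have : ∀ i : Fin n, F i false + F i true = if x i ≠ y i then 1 - 1/(d:ℝ) else 1 := by
      intro i
      by_cases h : x i ≠ y i
      · simp [hF, h, hp]
        field_simp
        ring
      · simp [hF, h]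
    rw [Finset.prod_congr rfl (fun i _ => this i), Finset.prod_ite, Finset.prod_const,
      Finset.prod_const, hk, one_pow, mul_one]
  rw [hG1, hF1, mul_one]
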